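/- Let H be an infinite-dimensional complex Hilbert space and let A = K(H) be the C*-algebra of compact operators on H. Then A is not ternary weakly amenable; in fact there exists ψ ∈ A* such that the map a ↦ ψa* − a*ψ is a continuous ternary derivation from A to A* which is not an inner ternary derivation. -/

import Mathlib

/-!
STATEMENT 1: Let `H` be an infinite-dimensional complex Hilbert space and
`A = K(H)` the C*-algebra of compact operators on `H` (realized here as the
submodule of compact operators inside `H →L[ℂ] H`, with operator products and
adjoints computed in `H →L[ℂ] H`).  Then `A` is not ternary weakly amenable;
in fact there exists `ψ ∈ A*` such that `a ↦ ψa* − a*ψ` is a continuous ternary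
derivation from `A` to `A*` which is not inner.  Here `(φb)(y) = φ(by)` and
`(bφ)(y) = φ(yb)`, so the map in question is `a ↦ (x ↦ ψ(a* x) − ψ(x a*))`.
-/

open scoped ComplexConjugate

noncomputable section

variable (H : Type*) [NormedAddCommGroup H] [InnerProductSpace ℂ H] [CompleteSpace H]

/-- The compact operators on `H`, as a submodule of `H →L[ℂ] H`. -/
abbrev KH : Submodule ℂ (H →L[ℂ] H) := compactOperator (RingHom.id ℂ) H H

variable {H}

lemma KH.mul_mem_left {T : H →L[ℂ] H} (hT : T ∈ KH H) (S : H →L[ℂ] H) :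
    S * T ∈ KH H := by
  have h : IsCompactOperator (⇑S ∘ ⇑T) := IsCompactOperator.clm_comp hT S
  exact h

lemma KH.mul_mem_right {T : H →L[ℂ] H} (hT : T ∈ KH H) (S : H →L[ℂ] H) :
    T * S ∈ KH H := by
  have h : IsCompactOperator (⇑T ∘ ⇑S) := IsCompactOperator.comp_clm hT S
  exact h

/-- The triple product `{a,b,c} = (a b* c + c b* a)/2` on the compact operators. -/
def jtripK (a b c : KH H) : KH H :=
  ⟨(2 : ℂ)⁻¹ • ((a : H →L[ℂ] H) * star (b : H →L[ℂ] H) * (c : H →L[ℂ] H)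
      + (c : H →L[ℂ] H) * star (b : H →L[ℂ] H) * (a : H →L[ℂ] H)),
    Submodule.smul_mem _ _ (Submodule.add_mem _
      (KH.mul_mem_right (KH.mul_mem_right a.2 _) _)
      (KH.mul_mem_right (KH.mul_mem_right c.2 _) _))⟩

/-- `a* x` as a compact operator, for compact `a, x`. -/
def starMulK (a x : KH H) : KH H :=
  ⟨star (a : H →L[ℂ] H) * (x : H →L[ℂ] H), KH.mul_mem_left x.2 _⟩

/-- `x a*` as a compact operator, for compact `a, x`. -/
def mulStarK (x a : KH H) : KH H :=
  ⟨(x : H →L[ℂ] H) * star (a : H →L[ℂ] H), KH.mul_mem_right x.2 _⟩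

/-- `δ : K(H) → K(H)*` (continuous, conjugate-linear) is a ternary derivation,
written out pointwise on the dual, where `{a,b,φ}(x) = {φ,b,a}(x) := φ({b,a,x})`
and `{a,φ,b}(x) := conj (φ({a,x,b}))`. -/
def IsTernaryDerK (δ : (KH H) →L⋆[ℂ] ((KH H) →L[ℂ] ℂ)) : Prop :=
  ∀ a b c x : KH H, δ (jtripK a b c) x
    = δ a (jtripK b c x) + conj (δ b (jtripK a x c)) + δ c (jtripK b a x)

/-- `δ : K(H) → K(H)*` is an inner ternary derivation: a finite sum of the maps
`a ↦ {b,φ,a} − {φ,b,a}`. -/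
def IsInnerTernaryDerK (δ : (KH H) →L⋆[ℂ] ((KH H) →L[ℂ] ℂ)) : Prop :=
  ∃ (n : ℕ) (b : Fin n → KH H) (φ : Fin n → ((KH H) →L[ℂ] ℂ)),
    ∀ a x : KH H, δ a x
      = ∑ i, (conj (φ i (jtripK (b i) x a)) - φ i (jtripK (b i) a x))

set_option linter.unusedSectionVars false
set_option maxHeartbeats 1000000

local notation "⟪" x ", " y "⟫" => @inner ℂ _ _ x y

namespace TWA

def rk (u v : H) : H →L[ℂ] H := (innerSL ℂ v).smulRight u

@[simp] lemma rk_apply (u v w : H) : rk u v w = ⟪v, w⟫ • u := rfl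

lemma isCompactOperator_rk (u v : H) : IsCompactOperator (rk u v) := by
  refine ⟨(fun c : ℂ => c • u) '' Metric.closedBall 0 ‖v‖, ?_, ?_⟩
  · exact (isCompact_closedBall 0 ‖v‖).image (by continuity)
  · filter_upwards [Metric.closedBall_mem_nhds (0:H) one_pos] with w hw
    refine ⟨⟪v,w⟫, ?_, rfl⟩
    simp only [Metric.mem_closedBall, dist_zero_right] at hw ⊢
    calc ‖⟪v,w⟫‖ ≤ ‖v‖ * ‖w‖ := norm_inner_le_norm v w
    _ ≤ ‖v‖ * 1 := by gcongr
    _ = ‖v‖ := mul_one _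

lemma rk_mem (u v : H) : rk u v ∈ KH H := isCompactOperator_rk u v

lemma norm_rk_le (u v : H) : ‖rk u v‖ ≤ ‖v‖ * ‖u‖ := by
  refine ContinuousLinearMap.opNorm_le_bound _ (by positivity) fun w => ?_
  rw [rk_apply, norm_smul]
  calc ‖⟪v,w⟫‖ * ‖u‖ ≤ (‖v‖ * ‖w‖) * ‖u‖ := by gcongr; exact norm_inner_le_norm v w
  _ = ‖v‖ * ‖u‖ * ‖w‖ := by ring

lemma star_rk (u v : H) : star (rk u v) = rk v u := by
  rw [ContinuousLinearMap.star_eq_adjoint]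
  symm
  rw [ContinuousLinearMap.eq_adjoint_iff]
  intro x y
  rw [rk_apply, rk_apply, inner_smul_left, inner_smul_right, inner_conj_symm]
  ring

lemma mul_rk (b : H →L[ℂ] H) (u v : H) : b * rk u v = rk (b u) v := by
  ext w; simp

lemma rk_mul (b : H →L[ℂ] H) (u v : H) : rk u v * b = rk u (star b v) := by
  ext w
  simp only [ContinuousLinearMap.mul_apply, rk_apply]
  congr 1
  rw [ContinuousLinearMap.star_eq_adjoint, ContinuousLinearMap.adjoint_inner_left]

lemma rk_mul_rk (u v u' v' : H) : rk u v * rk u' v' = ⟪v,u'⟫ • rk u v' := by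
  ext w
  rw [ContinuousLinearMap.mul_apply, rk_apply, rk_apply, inner_smul_right,
    ContinuousLinearMap.smul_apply, rk_apply, smul_smul, mul_comm]


variable (e₀ : H)

/-- `ψ(M) = i ⟪e₀, M e₀⟫`. -/
def psiK : (KH H) →L[ℂ] ℂ :=
  Complex.I • ((innerSL ℂ e₀).comp ((ContinuousLinearMap.apply ℂ H e₀).comp
    (Submodule.subtypeL (KH H))))

@[simp] lemma psiK_apply (M : KH H) :
    psiK e₀ M = Complex.I * ⟪e₀, (M : H →L[ℂ] H) e₀⟫ := rfl

/-- auxiliary scalar function for `δ`. -/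
def dfun (a x : KH H) : ℂ :=
  Complex.I * ⟪e₀, (star (a : H →L[ℂ] H) * (x : H →L[ℂ] H)
      - (x : H →L[ℂ] H) * star (a : H →L[ℂ] H)) e₀⟫

lemma dfun_eq (a x : KH H) :
    dfun e₀ a x = psiK e₀ (starMulK a x) - psiK e₀ (mulStarK x a) := by
  simp only [dfun, psiK_apply, starMulK, mulStarK, ContinuousLinearMap.sub_apply,
    inner_sub_right]
  ring

lemma dfun_bound (a x : KH H) : ‖dfun e₀ a x‖ ≤ (2 * ‖e₀‖ ^ 2) * ‖a‖ * ‖x‖ := by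
  have h1 : ‖(star (a : H →L[ℂ] H) * (x : H →L[ℂ] H)
      - (x : H →L[ℂ] H) * star (a : H →L[ℂ] H))‖ ≤ 2 * (‖a‖ * ‖x‖) := by
    calc ‖(star (a : H →L[ℂ] H) * (x : H →L[ℂ] H)
      - (x : H →L[ℂ] H) * star (a : H →L[ℂ] H))‖
        ≤ ‖star (a : H →L[ℂ] H) * (x : H →L[ℂ] H)‖
          + ‖(x : H →L[ℂ] H) * star (a : H →L[ℂ] H)‖ := norm_sub_le _ _
    _ ≤ ‖star (a : H →L[ℂ] H)‖ * ‖(x : H →L[ℂ] H)‖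
        + ‖(x : H →L[ℂ] H)‖ * ‖star (a : H →L[ℂ] H)‖ := by
        gcongr <;> exact norm_mul_le _ _
    _ = 2 * (‖a‖ * ‖x‖) := by rw [norm_star]; simp only [Submodule.coe_norm]; ring
  have h2 : ‖dfun e₀ a x‖ ≤ ‖e₀‖ * (‖(star (a : H →L[ℂ] H) * (x : H →L[ℂ] H)
      - (x : H →L[ℂ] H) * star (a : H →L[ℂ] H))‖ * ‖e₀‖) := by
    rw [dfun, norm_mul, Complex.norm_I, one_mul]
    refine (norm_inner_le_norm _ _).trans ?_
    gcongr
    exact ContinuousLinearMap.le_opNorm _ _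
  refine h2.trans ?_
  calc ‖e₀‖ * (‖(star (a : H →L[ℂ] H) * (x : H →L[ℂ] H)
      - (x : H →L[ℂ] H) * star (a : H →L[ℂ] H))‖ * ‖e₀‖)
      ≤ ‖e₀‖ * ((2 * (‖a‖ * ‖x‖)) * ‖e₀‖) := by gcongr
  _ = (2 * ‖e₀‖ ^ 2) * ‖a‖ * ‖x‖ := by simp only [Submodule.coe_norm]; ring

/-- The ternary derivation `δ a x = ψ(a* x) - ψ(x a*)`. -/
def deltaK : (KH H) →L⋆[ℂ] ((KH H) →L[ℂ] ℂ) :=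
  LinearMap.mkContinuous₂
    (LinearMap.mk₂'ₛₗ (starRingEnd ℂ) (RingHom.id ℂ) (dfun e₀)
      (fun a a' x => by
        simp only [dfun, Submodule.coe_add, star_add, add_mul, mul_add]
        rw [show star (a : H →L[ℂ] H) * x + star (a' : H →L[ℂ] H) * x
            - ((x : H →L[ℂ] H) * star (a : H →L[ℂ] H) + x * star (a' : H →L[ℂ] H))
          = (star (a : H →L[ℂ] H) * x - x * star (a : H →L[ℂ] H))
            + (star (a' : H →L[ℂ] H) * x - x * star (a' : H →L[ℂ] H)) by abel]
        rw [ContinuousLinearMap.add_apply, inner_add_right]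
        ring)
      (fun c a x => by
        simp only [dfun, Submodule.coe_smul, star_smul, smul_mul_assoc, mul_smul_comm,
          ← smul_sub, ContinuousLinearMap.smul_apply, inner_smul_right, smul_eq_mul,
          RingHom.id_apply, starRingEnd_apply]
        ring)
      (fun a x x' => by
        simp only [dfun, Submodule.coe_add, add_mul, mul_add]
        rw [show star (a : H →L[ℂ] H) * x + star (a : H →L[ℂ] H) * x'
            - ((x : H →L[ℂ] H) * star (a : H →L[ℂ] H) + (x' : H →L[ℂ] H) * star (a : H →L[ℂ] H))
          = (star (a : H →L[ℂ] H) * x - x * star (a : H →L[ℂ] H))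
            + (star (a : H →L[ℂ] H) * x' - x' * star (a : H →L[ℂ] H)) by abel]
        rw [ContinuousLinearMap.add_apply, inner_add_right]
        ring)
      (fun c a x => by
        simp only [dfun, Submodule.coe_smul, smul_mul_assoc, mul_smul_comm,
          ← smul_sub, ContinuousLinearMap.smul_apply, inner_smul_right, smul_eq_mul,
          RingHom.id_apply]
        ring))
    (2 * ‖e₀‖ ^ 2) (dfun_bound e₀)

@[simp] lemma deltaK_apply (a x : KH H) :
    deltaK e₀ a x = psiK e₀ (starMulK a x) - psiK e₀ (mulStarK x a) :=
  dfun_eq e₀ a x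


lemma inner_star_right (M : H →L[ℂ] H) (x y : H) : ⟪M x, y⟫ = ⟪x, (star M) y⟫ := by
  rw [ContinuousLinearMap.star_eq_adjoint, ContinuousLinearMap.adjoint_inner_right]

lemma conj_dfun (u v : KH H) :
    conj (dfun e₀ u v) =
      Complex.I * ⟪e₀, ((u : H →L[ℂ] H) * star (v : H →L[ℂ] H)
        - star (v : H →L[ℂ] H) * (u : H →L[ℂ] H)) e₀⟫ := by
  set U := (u : H →L[ℂ] H)
  set V := (v : H →L[ℂ] H)
  rw [dfun, map_mul, Complex.conj_I, inner_conj_symm]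
  rw [inner_star_right, star_sub, star_mul, star_mul, star_star]
  simp only [ContinuousLinearMap.sub_apply, inner_sub_right]
  ring

lemma isTernaryDer_deltaK : IsTernaryDerK (deltaK e₀) := by
  intro a b c x
  show dfun e₀ (jtripK a b c) x
    = dfun e₀ a (jtripK b c x) + conj (dfun e₀ b (jtripK a x c)) + dfun e₀ c (jtripK b a x)
  rw [conj_dfun]
  set A := (a : H →L[ℂ] H)
  set B := (b : H →L[ℂ] H)
  set C := (c : H →L[ℂ] H)
  set X := (x : H →L[ℂ] H)
  have key : star ((2:ℂ)⁻¹ • (A * star B * C + C * star B * A)) * X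
      - X * star ((2:ℂ)⁻¹ • (A * star B * C + C * star B * A))
    = (star A * ((2:ℂ)⁻¹ • (B * star C * X + X * star C * B))
        - ((2:ℂ)⁻¹ • (B * star C * X + X * star C * B)) * star A)
      + (B * star ((2:ℂ)⁻¹ • (A * star X * C + C * star X * A))
        - star ((2:ℂ)⁻¹ • (A * star X * C + C * star X * A)) * B)
      + (star C * ((2:ℂ)⁻¹ • (B * star A * X + X * star A * B))
        - ((2:ℂ)⁻¹ • (B * star A * X + X * star A * B)) * star C) := by
    simp only [star_smul, star_add, star_mul, star_star, RCLike.star_def, map_inv₀,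
      map_ofNat, smul_mul_assoc, mul_smul_comm, mul_add, add_mul, mul_assoc]
    module
  show Complex.I * ⟪e₀, (star ((2:ℂ)⁻¹ • (A * star B * C + C * star B * A)) * X
      - X * star ((2:ℂ)⁻¹ • (A * star B * C + C * star B * A))) e₀⟫ = _
  rw [key]
  simp only [dfun, jtripK, ContinuousLinearMap.add_apply, inner_add_right,
    ContinuousLinearMap.sub_apply, inner_sub_right]
  ring


lemma exists_findim_approx {m : ℕ} (T : Fin m → (H →L[ℂ] H))
    (hT : ∀ i, IsCompactOperator (T i)) {ε : ℝ} (hε : 0 < ε) :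
    ∃ K : Submodule ℂ H, FiniteDimensional ℂ K ∧
      ∀ (i : Fin m) (w : H), ∃ y ∈ K, ‖T i w - y‖ ≤ ε * ‖w‖ := by
  have h : ∀ i, ∃ t : Set H, t.Finite ∧
      (T i) '' Metric.ball 0 2 ⊆ ⋃ y ∈ t, Metric.ball y ε := by
    intro i
    obtain ⟨Kc, hKc, hsub⟩ :=
      IsCompactOperator.image_ball_subset_compact (f := (T i : H →ₗ[ℂ] H)) (hT i) 2
    obtain ⟨t, htfin, hcov⟩ := (Metric.totallyBounded_iff.mp hKc.totallyBounded) ε hε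
    exact ⟨t, htfin, by
      intro z hz
      exact hcov (hsub (by simpa using hz))⟩
  choose t htfin hcov using h
  refine ⟨Submodule.span ℂ (⋃ i, t i),
    FiniteDimensional.span_of_finite ℂ (Set.finite_iUnion htfin), fun i w => ?_⟩
  rcases eq_or_ne w 0 with rfl | hw
  · exact ⟨0, Submodule.zero_mem _, by simp⟩
  · have hnw : (0:ℝ) < ‖w‖ := norm_pos_iff.mpr hw
    set w' : H := ((‖w‖ : ℂ))⁻¹ • w with hw'
    have hw'norm : ‖w'‖ = 1 := by
      rw [hw', norm_smul]
      simp [norm_inv, hnw.ne']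
    have hmem : T i w' ∈ (T i) '' Metric.ball 0 2 := by
      exact ⟨w', by simp [Metric.mem_ball, hw'norm], rfl⟩
    obtain ⟨y₀, hy₀t, hy₀⟩ := by
      have := hcov i hmem
      simpa using this
    refine ⟨(‖w‖ : ℂ) • y₀, Submodule.smul_mem _ _
      (Submodule.subset_span (Set.mem_iUnion.mpr ⟨i, hy₀t⟩)), ?_⟩
    have hw'' : (‖w‖ : ℂ) • w' = w := by
      rw [hw', smul_smul]
      rw [mul_inv_cancel₀ (by exact_mod_cast hnw.ne')]
      simp
    calc ‖T i w - (‖w‖ : ℂ) • y₀‖ = ‖(‖w‖ : ℂ) • (T i w' - y₀)‖ := by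
          rw [smul_sub, ← map_smul, hw'']
    _ = ‖w‖ * ‖T i w' - y₀‖ := by rw [norm_smul]; simp
    _ ≤ ‖w‖ * ε := by
          gcongr
          exact le_of_lt (by simpa [Metric.mem_ball, dist_eq_norm] using hy₀)
    _ = ε * ‖w‖ := mul_comm _ _


section Q

variable (K : Submodule ℂ H) [FiniteDimensional ℂ K]

def fON (j : Fin (Module.finrank ℂ K)) : H := (stdOrthonormalBasis ℂ K j : H)

lemma fON_mem (j) : fON K j ∈ K := (stdOrthonormalBasis ℂ K j).2

lemma fON_inner (i j) : ⟪fON K i, fON K j⟫ = if i = j then 1 else 0 := by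
  have h := (stdOrthonormalBasis ℂ K).orthonormal
  rw [orthonormal_iff_ite] at h
  have := h i j
  rwa [Submodule.coe_inner] at this

def QK : H →L[ℂ] H := ∑ j, rk (fON K j) (fON K j)

lemma QK_apply (w : H) : QK K w = ∑ j, ⟪fON K j, w⟫ • fON K j := by
  simp [QK, ContinuousLinearMap.sum_apply]

lemma QK_fix {y : H} (hy : y ∈ K) : QK K y = y := by
  rw [QK_apply]
  have hrepr := (stdOrthonormalBasis ℂ K).sum_repr ⟨y, hy⟩
  have : ∀ j, ⟪fON K j, y⟫ = (stdOrthonormalBasis ℂ K).repr ⟨y, hy⟩ j := by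
    intro j
    rw [(stdOrthonormalBasis ℂ K).repr_apply_apply, Submodule.coe_inner]
    rfl
  calc (∑ j, ⟪fON K j, y⟫ • fON K j)
      = ((∑ j, (stdOrthonormalBasis ℂ K).repr ⟨y, hy⟩ j • stdOrthonormalBasis ℂ K j : K) : H) := by
        rw [Submodule.coe_sum]
        exact Finset.sum_congr rfl fun j _ => by rw [this j, Submodule.coe_smul]; rfl
  _ = y := by rw [hrepr]

lemma inner_QK_self (w : H) : ⟪QK K w, QK K w⟫ = ⟪QK K w, w⟫ := by
  rw [QK_apply]
  rw [sum_inner, sum_inner]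
  refine Finset.sum_congr rfl fun i _ => ?_
  rw [inner_smul_left, inner_smul_left]
  congr 1
  rw [inner_sum]
  rw [Finset.sum_eq_single i]
  · rw [inner_smul_right, fON_inner, if_pos rfl, mul_one]
  · intro j _ hj
    rw [inner_smul_right, fON_inner, if_neg (Ne.symm hj), mul_zero]
  · intro hi
    exact absurd (Finset.mem_univ i) hi

lemma QK_pyth (w : H) : ‖w - QK K w‖ ^ 2 + ‖QK K w‖ ^ 2 = ‖w‖ ^ 2 := by
  have h := @norm_sub_sq ℂ _ _ _ _ w (QK K w)
  have h2 : RCLike.re ⟪w, QK K w⟫ = ‖QK K w‖ ^ 2 := by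
    rw [← inner_conj_symm, ← inner_QK_self, inner_self_eq_norm_sq_to_K]
    simp [← Complex.ofReal_pow]
  rw [h2] at h
  linarith

lemma norm_QK_apply_le (w : H) : ‖QK K w‖ ≤ ‖w‖ := by
  have h := QK_pyth K w
  nlinarith [norm_nonneg (w - QK K w), norm_nonneg (QK K w), norm_nonneg w]

lemma norm_sub_QK_apply_le (w : H) : ‖w - QK K w‖ ≤ ‖w‖ := by
  have h := QK_pyth K w
  nlinarith [norm_nonneg (w - QK K w), norm_nonneg (QK K w), norm_nonneg w]

lemma star_QK : star (QK K) = QK K := by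
  rw [QK, star_sum]
  exact Finset.sum_congr rfl fun j _ => star_rk _ _

lemma norm_QK_le : ‖QK K‖ ≤ 1 :=
  ContinuousLinearMap.opNorm_le_bound _ zero_le_one fun w => by
    rw [one_mul]; exact norm_QK_apply_le K w

lemma QK_left_approx {T : H →L[ℂ] H} {ε : ℝ}
    (hcov : ∀ w, ∃ y ∈ K, ‖T w - y‖ ≤ ε * ‖w‖) (hε : 0 ≤ ε) :
    ‖T - QK K * T‖ ≤ ε := by
  refine ContinuousLinearMap.opNorm_le_bound _ hε fun w => ?_
  obtain ⟨y, hyK, hy⟩ := hcov w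
  have : (T - QK K * T) w = (T w - y) - QK K (T w - y) := by
    simp only [ContinuousLinearMap.sub_apply, ContinuousLinearMap.mul_apply, map_sub,
      QK_fix K hyK]
    abel
  rw [this]
  exact (norm_sub_QK_apply_le K _).trans hy

lemma QK_right_approx {T : H →L[ℂ] H} {ε : ℝ}
    (hcov : ∀ w, ∃ y ∈ K, ‖star T w - y‖ ≤ ε * ‖w‖) (hε : 0 ≤ ε) :
    ‖T - T * QK K‖ ≤ ε := by
  have h := QK_left_approx K hcov hε
  rw [← norm_star (T - T * QK K)]
  rwa [star_sub, star_mul, star_QK]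

lemma QK_comm_approx {T : H →L[ℂ] H} {ε : ℝ}
    (h1 : ‖T - QK K * T‖ ≤ ε) (h2 : ‖T - T * QK K‖ ≤ ε) :
    ‖T * QK K - QK K * T‖ ≤ 2 * ε := by
  have key : T * QK K - QK K * T
      = (T - QK K * T) * QK K - QK K * (T - T * QK K) := by
    simp only [sub_mul, mul_sub, mul_assoc]
    abel
  rw [key]
  calc ‖(T - QK K * T) * QK K - QK K * (T - T * QK K)‖
      ≤ ‖(T - QK K * T) * QK K‖ + ‖QK K * (T - T * QK K)‖ := norm_sub_le _ _
  _ ≤ ‖T - QK K * T‖ * ‖QK K‖ + ‖QK K‖ * ‖T - T * QK K‖ := by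
      gcongr <;> exact norm_mul_le _ _
  _ ≤ ε * 1 + 1 * ε := by
      have h3 := norm_QK_le K
      have hε : (0:ℝ) ≤ ε := le_trans (norm_nonneg _) h1
      gcongr <;> first | exact norm_nonneg _ | assumption
  _ = 2 * ε := by ring

end Q


lemma norm_eq_one_of_inner_self {w : H} (h : ⟪w, w⟫ = 1) : ‖w‖ = 1 := by
  have h2 := inner_self_eq_norm_sq (𝕜 := ℂ) w
  rw [h] at h2
  simp at h2
  nlinarith [norm_nonneg w]

lemma inner_self_one {w : H} (h : ‖w‖ = 1) : ⟪w, w⟫ = 1 := by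
  rw [inner_self_eq_norm_sq_to_K (𝕜 := ℂ), h]
  simp

lemma jtrip_diag_coe (bb : KH H) {u v : H} (hu : ‖u‖ = 1) (hv : ‖v‖ = 1) :
    ((jtripK bb ⟨rk u v, rk_mem u v⟩ ⟨rk u v, rk_mem u v⟩ : KH H) : H →L[ℂ] H)
      = (2:ℂ)⁻¹ • ((bb : H →L[ℂ] H) * rk v v + rk u u * (bb : H →L[ℂ] H)) := by
  show (2:ℂ)⁻¹ • ((bb : H →L[ℂ] H) * star (rk u v) * rk u v
      + rk u v * star (rk u v) * (bb : H →L[ℂ] H)) = _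
  rw [star_rk, mul_assoc _ (rk v u) (rk u v), rk_mul_rk, rk_mul_rk,
    inner_self_one hu, inner_self_one hv, one_smul, one_smul]

lemma delta_diag {u v : H} (hu : ‖u‖ = 1) (hv : ‖v‖ = 1) :
    deltaK e₀ ⟨rk u v, rk_mem u v⟩ ⟨rk u v, rk_mem u v⟩
      = Complex.I * (⟪v,e₀⟫ * ⟪e₀,v⟫ - ⟪u,e₀⟫ * ⟪e₀,u⟫) := by
  show dfun e₀ _ _ = _
  rw [dfun]
  rw [show star (rk u v) * rk u v - rk u v * star (rk u v) = rk v v - rk u u by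
    rw [star_rk, rk_mul_rk, rk_mul_rk, inner_self_one hu, inner_self_one hv,
      one_smul, one_smul]]
  rw [ContinuousLinearMap.sub_apply, inner_sub_right, rk_apply, rk_apply,
    inner_smul_right, inner_smul_right]


lemma QK_mem' (K : Submodule ℂ H) [FiniteDimensional ℂ K] (w : H) : QK K w ∈ K := by
  rw [QK_apply]
  exact Submodule.sum_mem _ fun j _ => Submodule.smul_mem _ _ (fON_mem K j)

/-- Two-sided finite-rank approximation for a finite family of compact operators,
with a prescribed vector in the subspace. -/
lemma exists_findim_approx₂ {m : ℕ} (T : Fin m → (H →L[ℂ] H))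
    (hT : ∀ i, IsCompactOperator (T i)) (e : H) {ε : ℝ} (hε : 0 < ε) :
    ∃ (K : Submodule ℂ H) (_ : FiniteDimensional ℂ K), e ∈ K ∧
      (∀ i, ‖T i - QK K * T i‖ ≤ ε) ∧ (∀ i, ‖T i - T i * QK K‖ ≤ ε) := by
  obtain ⟨K₁, hK₁, hcov₁⟩ := exists_findim_approx T hT hε
  haveI := hK₁
  -- subspace collecting the images of `K₁` under the adjoints
  set K₂ : Submodule ℂ H := ⨆ i, K₁.map ((star (T i) : H →L[ℂ] H) : H →ₗ[ℂ] H) with hK₂def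
  haveI : FiniteDimensional ℂ K₂ := by
    apply Submodule.finiteDimensional_iSup
  set K : Submodule ℂ H := (K₁ ⊔ K₂) ⊔ (ℂ ∙ e) with hKdef
  haveI : FiniteDimensional ℂ K := by
    infer_instance
  have hK₁le : K₁ ≤ K := le_trans le_sup_left le_sup_left
  have hK₂le : K₂ ≤ K := le_trans le_sup_right le_sup_left
  have hcovK : ∀ i w, ∃ y ∈ K, ‖T i w - y‖ ≤ ε * ‖w‖ := fun i w => by
    obtain ⟨y, hy, h⟩ := hcov₁ i w
    exact ⟨y, hK₁le hy, h⟩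
  have hleft : ∀ i, ‖T i - QK K * T i‖ ≤ ε := fun i =>
    QK_left_approx K (hcovK i) hε.le
  refine ⟨K, ‹_›, (le_sup_right : (ℂ ∙ e) ≤ K) (Submodule.mem_span_singleton_self e), hleft, fun i => ?_⟩
  -- right approximation via the adjoint
  have hQ1 : ‖T i - QK K₁ * T i‖ ≤ ε := QK_left_approx K₁ (hcov₁ i) hε.le
  have hstar : ‖star (T i) - star (T i) * QK K₁‖ ≤ ε := by
    rw [← norm_star (star (T i) - star (T i) * QK K₁), star_sub, star_mul, star_QK, star_star]
    exact hQ1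
  have hcovs : ∀ w, ∃ y ∈ K, ‖star (T i) w - y‖ ≤ ε * ‖w‖ := by
    intro w
    refine ⟨star (T i) (QK K₁ w), ?_, ?_⟩
    · apply hK₂le
      apply Submodule.mem_iSup_of_mem i
      exact Submodule.mem_map_of_mem (QK_mem' K₁ w)
    · have : star (T i) w - star (T i) (QK K₁ w)
          = (star (T i) - star (T i) * QK K₁) w := by
        simp [ContinuousLinearMap.sub_apply]
      rw [this]
      exact (ContinuousLinearMap.le_opNorm _ _).trans (by gcongr)
  exact QK_right_approx K hcovs hε.le

lemma exists_unit_orth (hH : ¬ FiniteDimensional ℂ H)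
    (K : Submodule ℂ H) [FiniteDimensional ℂ K] :
    ∃ e : H, ‖e‖ = 1 ∧ ∀ y ∈ K, ⟪y, e⟫ = 0 := by
  have hKne : K ≠ ⊤ := by
    rintro rfl
    exact hH (Module.Finite.equiv (Submodule.topEquiv (R := ℂ) (M := H)))
  have horth : Kᗮ ≠ ⊥ := by
    intro hbot
    exact hKne (Submodule.orthogonal_eq_bot_iff.mp hbot)
  obtain ⟨v, hvmem, hvne⟩ := Submodule.exists_mem_ne_zero_of_ne_bot horth
  have hnv : (0:ℝ) < ‖v‖ := norm_pos_iff.mpr hvne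
  refine ⟨((‖v‖:ℂ))⁻¹ • v, ?_, ?_⟩
  · rw [norm_smul]
    simp [hnv.ne']
  · intro y hy
    rw [inner_smul_right]
    rw [Submodule.mem_orthogonal] at hvmem
    rw [hvmem y hy, mul_zero]


theorem deltaK_not_inner (hH : ¬ FiniteDimensional ℂ H) {e₀ : H} (he₀ : ‖e₀‖ = 1) :
    ¬ IsInnerTernaryDerK (deltaK e₀) := by
  rintro ⟨n, b, φ, hinner⟩
  set C : ℝ := ∑ i, ‖φ i‖ with hCdef
  have hC0 : 0 ≤ C := Finset.sum_nonneg fun i _ => norm_nonneg (φ i)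
  set ε₁ : ℝ := (4 * (C+1))⁻¹ with hε₁def
  have hε₁ : (0:ℝ) < ε₁ := by positivity
  obtain ⟨K₀, hfd₀, he₀K, hL₀, hR₀⟩ :=
    exists_findim_approx₂ (fun i => ((b i : H →L[ℂ] H))) (fun i => (b i).2) e₀ hε₁
  haveI := hfd₀
  set N := Module.finrank ℂ K₀ with hNdef
  set ε₂ : ℝ := (4 * (N+1) * (C+1))⁻¹ with hε₂def
  have hε₂ : (0:ℝ) < ε₂ := by positivity
  obtain ⟨K₂, hfd₂, he₀K₂, hL₂, hR₂⟩ :=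
    exists_findim_approx₂ (fun i => ((b i : H →L[ℂ] H))) (fun i => (b i).2) e₀ hε₂
  haveI := hfd₂
  obtain ⟨e', he'1, he'orth⟩ := exists_unit_orth hH K₂
  have he₀e' : ⟪e₀, e'⟫ = 0 := he'orth e₀ he₀K₂
  have he'e₀ : ⟪e', e₀⟫ = 0 := by rw [← inner_conj_symm, he₀e', map_zero]
  have hfj : ∀ j, ‖fON K₀ j‖ = 1 := fun j =>
    norm_eq_one_of_inner_self (by rw [fON_inner, if_pos rfl])
  -- the pollution terms are small
  have hQ₂e' : QK K₂ e' = 0 := by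
    rw [QK_apply]
    exact Finset.sum_eq_zero fun j _ => by
      rw [he'orth _ (fON_mem K₂ j), zero_smul]
  have hp'norm : ‖rk e' e'‖ ≤ 1 := by
    have := norm_rk_le e' e'
    rwa [he'1, mul_one] at this
  have hs2 : ∀ i, ‖(b i : H →L[ℂ] H) * rk e' e'‖ ≤ ε₂ := by
    intro i
    have hzero : QK K₂ * rk e' e' = 0 := by
      ext w
      simp [ContinuousLinearMap.mul_apply, hQ₂e']
    have heq : (b i : H →L[ℂ] H) * rk e' e'
        = ((b i : H →L[ℂ] H) - (b i : H →L[ℂ] H) * QK K₂) * rk e' e' := by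
      rw [sub_mul, mul_assoc, hzero, mul_zero, sub_zero]
    rw [heq]
    calc ‖((b i : H →L[ℂ] H) - (b i : H →L[ℂ] H) * QK K₂) * rk e' e'‖
        ≤ ‖(b i : H →L[ℂ] H) - (b i : H →L[ℂ] H) * QK K₂‖ * ‖rk e' e'‖ := norm_mul_le _ _
    _ ≤ ε₂ * 1 := mul_le_mul (hR₂ i) hp'norm (norm_nonneg _) hε₂.le
    _ = ε₂ := mul_one _
  have hs1 : ∀ i, ‖rk e' e' * (b i : H →L[ℂ] H)‖ ≤ ε₂ := by
    intro i
    have hzero : rk e' e' * QK K₂ = 0 := by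
      ext w
      have he'g : ∀ j, ⟪e', fON K₂ j⟫ = 0 := fun j => by
        rw [← inner_conj_symm, he'orth _ (fON_mem K₂ j), map_zero]
      have : ⟪e', QK K₂ w⟫ = 0 := by
        rw [QK_apply, inner_sum]
        exact Finset.sum_eq_zero fun j _ => by
          rw [inner_smul_right, he'g j, mul_zero]
      simp [ContinuousLinearMap.mul_apply, this]
    have heq : rk e' e' * (b i : H →L[ℂ] H)
        = rk e' e' * ((b i : H →L[ℂ] H) - QK K₂ * (b i : H →L[ℂ] H)) := by
      rw [mul_sub, ← mul_assoc, hzero, zero_mul, sub_zero]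
    rw [heq]
    calc ‖rk e' e' * ((b i : H →L[ℂ] H) - QK K₂ * (b i : H →L[ℂ] H))‖
        ≤ ‖rk e' e'‖ * ‖(b i : H →L[ℂ] H) - QK K₂ * (b i : H →L[ℂ] H)‖ := norm_mul_le _ _
    _ ≤ 1 * ε₂ := mul_le_mul hp'norm (hL₂ i) (norm_nonneg _) zero_le_one
    _ = ε₂ := one_mul _
  have hcomm : ∀ i, ‖(b i : H →L[ℂ] H) * QK K₀ - QK K₀ * (b i : H →L[ℂ] H)‖ ≤ 2 * ε₁ :=
    fun i => QK_comm_approx K₀ (hL₀ i) (hR₀ i)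
  -- the two families of test elements
  set aL : Fin N → KH H := fun j => ⟨rk e' (fON K₀ j), rk_mem _ _⟩ with haL
  set aR : Fin N → KH H := fun j => ⟨rk (fON K₀ j) e', rk_mem _ _⟩ with haR
  -- the inner-derivation identity, summed over the family
  have key : ∀ (g : Fin N → KH H),
      (∑ j, deltaK e₀ (g j) (g j))
        = conj (∑ i, φ i (∑ j, jtripK (b i) (g j) (g j)))
          - ∑ i, φ i (∑ j, jtripK (b i) (g j) (g j)) := by
    intro g
    rw [map_sum]
    calc (∑ j, deltaK e₀ (g j) (g j))
        = ∑ j, ∑ i, (conj (φ i (jtripK (b i) (g j) (g j)))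
            - φ i (jtripK (b i) (g j) (g j))) :=
          Finset.sum_congr rfl fun j _ => hinner (g j) (g j)
    _ = ∑ i, ∑ j, (conj (φ i (jtripK (b i) (g j) (g j)))
            - φ i (jtripK (b i) (g j) (g j))) := Finset.sum_comm
    _ = ∑ i, (conj (φ i (∑ j, jtripK (b i) (g j) (g j)))
            - φ i (∑ j, jtripK (b i) (g j) (g j))) := by
        refine Finset.sum_congr rfl fun i _ => ?_
        rw [map_sum, map_sum, Finset.sum_sub_distrib]
    _ = _ := by rw [Finset.sum_sub_distrib]
  -- Parseval-type identity
  have hsum1 : ∑ j, ⟪fON K₀ j, e₀⟫ * ⟪e₀, fON K₀ j⟫ = 1 := by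
    have h1 : ⟪e₀, QK K₀ e₀⟫ = 1 := by
      rw [QK_fix K₀ he₀K, inner_self_one he₀]
    rw [← h1, QK_apply, inner_sum]
    exact Finset.sum_congr rfl fun j _ => by rw [inner_smul_right, mul_comm]
  -- the two scalar equations
  set Z₁ : ℂ := ∑ i, φ i (∑ j, jtripK (b i) (aL j) (aL j)) with hZ₁def
  set Z₂ : ℂ := ∑ i, φ i (∑ j, jtripK (b i) (aR j) (aR j)) with hZ₂def
  have hZ₁ : conj Z₁ - Z₁ = Complex.I := by
    rw [← key aL]
    calc (∑ j, deltaK e₀ (aL j) (aL j))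
        = ∑ j, Complex.I * (⟪fON K₀ j, e₀⟫ * ⟪e₀, fON K₀ j⟫) := by
          refine Finset.sum_congr rfl fun j _ => ?_
          rw [delta_diag e₀ he'1 (hfj j), he'e₀, zero_mul, sub_zero]
    _ = Complex.I := by rw [← Finset.mul_sum, hsum1, mul_one]
  have hZ₂ : conj Z₂ - Z₂ = -Complex.I := by
    rw [← key aR]
    calc (∑ j, deltaK e₀ (aR j) (aR j))
        = ∑ j, -(Complex.I * (⟪fON K₀ j, e₀⟫ * ⟪e₀, fON K₀ j⟫)) := by
          refine Finset.sum_congr rfl fun j _ => ?_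
          rw [delta_diag e₀ (hfj j) he'1, he'e₀, zero_mul, zero_sub, mul_neg]
    _ = -Complex.I := by
          rw [Finset.sum_neg_distrib, ← Finset.mul_sum, hsum1, mul_one]
  -- imaginary parts
  have him : (Z₁ - Z₂).im = -1 := by
    have h1 : (conj Z₁ - Z₁).im = -2 * Z₁.im := by
      simp [Complex.sub_im, Complex.conj_im]; ring
    have h2 : (conj Z₂ - Z₂).im = -2 * Z₂.im := by
      simp [Complex.sub_im, Complex.conj_im]; ring
    rw [hZ₁] at h1
    rw [hZ₂] at h2
    simp only [Complex.I_im, Complex.neg_im] at h1 h2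
    rw [Complex.sub_im]
    linarith
  have habs : (1:ℝ) ≤ ‖Z₁ - Z₂‖ := by
    calc (1:ℝ) = |(Z₁ - Z₂).im| := by rw [him]; norm_num
    _ ≤ ‖Z₁ - Z₂‖ := Complex.abs_im_le_norm _
  -- norm estimate on Z₁ - Z₂
  have hdiff : ∀ i : Fin n,
      ((∑ j, jtripK (b i) (aL j) (aL j)) - (∑ j, jtripK (b i) (aR j) (aR j)) : KH H)
        = ⟨(2:ℂ)⁻¹ • (((b i : H →L[ℂ] H) * QK K₀ - QK K₀ * (b i : H →L[ℂ] H))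
            + (N:ℂ) • (rk e' e' * (b i : H →L[ℂ] H) - (b i : H →L[ℂ] H) * rk e' e')),
          Submodule.smul_mem _ _ (Submodule.add_mem _
            (Submodule.sub_mem _ (KH.mul_mem_right (b i).2 _) (KH.mul_mem_left (b i).2 _))
            (Submodule.smul_mem _ _ (Submodule.sub_mem _
              (KH.mul_mem_left (b i).2 _) (KH.mul_mem_right (b i).2 _))))⟩ := by
    intro i
    apply Subtype.ext
    push_cast [Submodule.coe_sum]
    rw [Finset.sum_congr rfl (fun j (_ : j ∈ Finset.univ) =>
      jtrip_diag_coe (b i) he'1 (hfj j)),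
      Finset.sum_congr rfl (fun j (_ : j ∈ Finset.univ) =>
      jtrip_diag_coe (b i) (hfj j) he'1)]
    have h1 : ∑ j, (2:ℂ)⁻¹ • ((b i : H →L[ℂ] H) * rk (fON K₀ j) (fON K₀ j)
          + rk e' e' * (b i : H →L[ℂ] H))
        = (2:ℂ)⁻¹ • ((b i : H →L[ℂ] H) * QK K₀
          + (N:ℂ) • (rk e' e' * (b i : H →L[ℂ] H))) := by
      rw [← Finset.smul_sum, Finset.sum_add_distrib, ← Finset.mul_sum, Finset.sum_const,
        Finset.card_univ, Fintype.card_fin, Nat.cast_smul_eq_nsmul]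
      rfl
    have h2 : ∑ j, (2:ℂ)⁻¹ • ((b i : H →L[ℂ] H) * rk e' e'
          + rk (fON K₀ j) (fON K₀ j) * (b i : H →L[ℂ] H))
        = (2:ℂ)⁻¹ • ((N:ℂ) • ((b i : H →L[ℂ] H) * rk e' e')
          + QK K₀ * (b i : H →L[ℂ] H)) := by
      rw [← Finset.smul_sum, Finset.sum_add_distrib, Finset.sum_const,
        Finset.card_univ, Fintype.card_fin, ← Finset.sum_mul, Nat.cast_smul_eq_nsmul]
      rfl
    rw [h1, h2]
    module
  have hMnorm : ∀ i : Fin n,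
      ‖(2:ℂ)⁻¹ • (((b i : H →L[ℂ] H) * QK K₀ - QK K₀ * (b i : H →L[ℂ] H))
        + (N:ℂ) • (rk e' e' * (b i : H →L[ℂ] H) - (b i : H →L[ℂ] H) * rk e' e'))‖
        ≤ ε₁ + N * ε₂ := by
    intro i
    rw [norm_smul]
    have hX : ‖((b i : H →L[ℂ] H) * QK K₀ - QK K₀ * (b i : H →L[ℂ] H))
        + (N:ℂ) • (rk e' e' * (b i : H →L[ℂ] H) - (b i : H →L[ℂ] H) * rk e' e')‖
        ≤ 2 * ε₁ + N * (2 * ε₂) := by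
      refine (norm_add_le _ _).trans ?_
      have h2 : ‖(N:ℂ) • (rk e' e' * (b i : H →L[ℂ] H)
          - (b i : H →L[ℂ] H) * rk e' e')‖ ≤ N * (2 * ε₂) := by
        rw [norm_smul]
        have : ‖((N:ℕ):ℂ)‖ = (N:ℝ) := by
          simp
        rw [this]
        have := (norm_sub_le (rk e' e' * (b i : H →L[ℂ] H))
          ((b i : H →L[ℂ] H) * rk e' e')).trans
          (add_le_add (hs1 i) (hs2 i))
        calc (N:ℝ) * ‖rk e' e' * (b i : H →L[ℂ] H) - (b i : H →L[ℂ] H) * rk e' e'‖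
            ≤ (N:ℝ) * (ε₂ + ε₂) := by gcongr
        _ = N * (2 * ε₂) := by ring
      exact add_le_add (hcomm i) h2
    have hn : ‖((2:ℂ))⁻¹‖ = (2:ℝ)⁻¹ := by norm_num
    rw [hn]
    calc (2:ℝ)⁻¹ * ‖_ + _‖ ≤ (2:ℝ)⁻¹ * (2 * ε₁ + N * (2 * ε₂)) := by gcongr
    _ = ε₁ + N * ε₂ := by ring
  have hZbound : ‖Z₁ - Z₂‖ ≤ C * (ε₁ + N * ε₂) := by
    rw [hZ₁def, hZ₂def, ← Finset.sum_sub_distrib]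
    refine (norm_sum_le _ _).trans ?_
    rw [hCdef, Finset.sum_mul]
    refine Finset.sum_le_sum fun i _ => ?_
    rw [← map_sub]
    have hb : ‖(φ i) ((∑ j, jtripK (b i) (aL j) (aL j))
        - ∑ j, jtripK (b i) (aR j) (aR j))‖ ≤ ‖φ i‖
        * ‖(∑ j, jtripK (b i) (aL j) (aL j)) - ∑ j, jtripK (b i) (aR j) (aR j)‖ :=
      ContinuousLinearMap.le_opNorm _ _
    refine hb.trans ?_
    gcongr
    rw [hdiff i, Submodule.coe_norm]
    exact hMnorm i
  have hb1 : C * ε₁ ≤ 1/4 := by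
    rw [hε₁def]
    rw [show C * (4 * (C+1))⁻¹ = C / (4 * (C+1)) by ring,
      div_le_div_iff₀ (by positivity) (by norm_num)]
    linarith
  have hb2 : C * (N * ε₂) ≤ 1/4 := by
    rw [hε₂def]
    rw [show C * ((N:ℝ) * (4 * ((N:ℝ)+1) * (C+1))⁻¹) = (C * N) / (4 * ((N:ℝ)+1) * (C+1)) by ring,
      div_le_div_iff₀ (by positivity) (by norm_num)]
    nlinarith [hC0, Nat.cast_nonneg (α := ℝ) N]
  have : (1:ℝ) ≤ 1/2 := by
    refine habs.trans (hZbound.trans ?_)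
    calc C * (ε₁ + N * ε₂) = C * ε₁ + C * (N * ε₂) := by ring
    _ ≤ 1/4 + 1/4 := add_le_add hb1 hb2
    _ = 1/2 := by norm_num
  linarith

end TWA

/-- `K(H)` is not ternary weakly amenable for infinite-dimensional `H`: there is
`ψ ∈ K(H)*` such that `a ↦ ψa* − a*ψ` is a continuous ternary derivation which is
not inner. -/
theorem compact_operators_not_ternary_weakly_amenable
    (hH : ¬ FiniteDimensional ℂ H) :
    (¬ ∀ δ : (KH H) →L⋆[ℂ] ((KH H) →L[ℂ] ℂ),
        IsTernaryDerK δ → IsInnerTernaryDerK δ)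
    ∧ ∃ (ψ : (KH H) →L[ℂ] ℂ) (δ : (KH H) →L⋆[ℂ] ((KH H) →L[ℂ] ℂ)),
        (∀ a x : KH H, δ a x = ψ (starMulK a x) - ψ (mulStarK x a))
        ∧ IsTernaryDerK δ ∧ ¬ IsInnerTernaryDerK δ := by
  obtain ⟨e₀, he₀, -⟩ := TWA.exists_unit_orth hH (⊥ : Submodule ℂ H)
  refine ⟨fun hall => TWA.deltaK_not_inner hH he₀
      (hall _ (TWA.isTernaryDer_deltaK e₀)),
    TWA.psiK e₀, TWA.deltaK e₀, fun a x => TWA.deltaK_apply e₀ a x,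
    TWA.isTernaryDer_deltaK e₀, TWA.deltaK_not_inner hH he₀⟩
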